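/- arXiv:2305.05596 — 4 statements merged into one kernel-verified Lean document; each statement's English description precedes it below -/
import Mathlib

section
/- Let (A_1,...,A_ℓ) be an (n,k,ℓ)-generic collection with Σᵢ|A_i| = (ℓ-1)k, and suppose A_1,...,A_{ℓ-x} all have size exactly k for some 2 ≤ x ≤ ℓ. Then the remaining sets (A_{ℓ-x+1},...,A_ℓ) form an (n,k,x)-generic collection with Σ_{i=ℓ-x+1}^{ℓ}|A_i| = (x-1)k. -/
/-!
Refine a partition of the last `x` indices by adding each of the first `ℓ - x` indices as a
singleton part. Every new part adds `|A i| ≥ k` to the left side of the genericity inequality of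
the refined partition of `[ℓ]` and exactly `k` to its right side, so the inequality for the
partition of `[x]` follows. The sum identity holds because the first `ℓ - x` sets contribute
`(ℓ - x) k` to `(ℓ - 1) k`.
-/

/-- An `(n,k,ℓ)`-generic collection: subsets of `[n]` of size at most `k` such that
for every partition of `[ℓ]` into parts `P₁,…,Pₛ`, `∑ᵢ |⋂_{j∈Pᵢ} Aⱼ| ≤ (s-1)k`. -/
def IsGenericCollection (n k : ℕ) {ℓ : ℕ} (A : Fin ℓ → Finset (Fin n)) : Prop :=
  (∀ i, (A i).card ≤ k) ∧
  ∀ P : Finpartition (Finset.univ : Finset (Fin ℓ)),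
    ∑ q ∈ P.parts, (q.inf A).card ≤ (P.parts.card - 1) * k

open Finset

namespace Finpartition

theorem disjoint_parts {α : Type*} [Lattice α] [OrderBot α] {a b : α} (P : Finpartition a)
    (Q : Finpartition b) (h : Disjoint a b) : Disjoint P.parts Q.parts :=
  disjoint_left.2 fun _ hp hq => P.ne_bot hp (disjoint_self.1 (h.mono (P.le hp) (Q.le hq)))

@[simps]
def disjUnion {α : Type*} [DistribLattice α] [OrderBot α] {a b : α}
    (P : Finpartition a) (Q : Finpartition b) (h : Disjoint a b) : Finpartition (a ⊔ b) where
  parts := P.parts.disjUnion Q.parts (P.disjoint_parts Q h)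
  supIndep := by
    rw [supIndep_iff_pairwiseDisjoint, coe_disjUnion, Set.pairwiseDisjoint_union]
    exact ⟨P.disjoint, Q.disjoint, fun p hp q hq _ => h.mono (P.le hp) (Q.le hq)⟩
  sup_parts := by classical rw [disjUnion_eq_union, sup_union, P.sup_parts, Q.sup_parts]
  bot_notMem := by simp [P.bot_notMem, Q.bot_notMem]

variable {α β : Type*} [DecidableEq α] [DecidableEq β]

@[simps]
def finsetMap {s : Finset α} (P : Finpartition s) (e : α ↪ β) : Finpartition (s.map e) where
  parts := P.parts.map (mapEmbedding e).toEmbedding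
  supIndep := by
    rw [supIndep_iff_pairwiseDisjoint, coe_map]
    rintro _ ⟨p, hp, rfl⟩ _ ⟨q, hq, rfl⟩ hpq
    exact (disjoint_map e).2 (P.disjoint hp hq (ne_of_apply_ne _ hpq))
  sup_parts := by
    ext b
    conv_rhs => rw [← P.sup_parts]
    simp only [sup_map, mem_sup, mem_map, Function.comp_apply, id_eq,
      RelEmbedding.coe_toEmbedding, mapEmbedding_apply]
    exact ⟨fun ⟨p, hp, a, ha, h⟩ => ⟨a, ⟨p, hp, ha⟩, h⟩,
      fun ⟨a, ⟨p, hp, ha⟩, h⟩ => ⟨p, hp, a, ha, h⟩⟩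
  bot_notMem := by simp

end Finpartition

theorem IsGenericCollection.comp_embedding {n k ℓ x : ℕ} {A : Fin ℓ → Finset (Fin n)}
    (hA : IsGenericCollection n k A) (e : Fin x ↪ Fin ℓ)
    (hfull : ∀ i ∉ univ.map e, k ≤ #(A i)) :
    IsGenericCollection n k (A ∘ e) := by
  classical
  refine ⟨fun i => hA.1 (e i), fun Q => ?_⟩
  set c := (univ.map e)ᶜ
  let P : Finpartition (univ : Finset (Fin ℓ)) :=
    ((Q.finsetMap e).disjUnion (⊥ : Finpartition c) disjoint_compl_right).copy (union_compl _)
  have hcard : #P.parts = #Q.parts + #c := by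
    simp only [P, Finpartition.copy_parts, Finpartition.disjUnion_parts, card_disjUnion,
      Finpartition.finsetMap_parts, card_map, Finpartition.card_bot]
  have hsum : ∑ p ∈ P.parts, #(p.inf A) =
      ∑ q ∈ Q.parts, #(q.inf (A ∘ e)) + ∑ i ∈ c, #(A i) := by
    simp only [P, Finpartition.copy_parts, Finpartition.disjUnion_parts, sum_disjUnion,
      Finpartition.finsetMap_parts, Finpartition.parts_bot, sum_map, RelEmbedding.coe_toEmbedding,
      mapEmbedding_apply, inf_map, Function.Embedding.coeFn_mk, inf_singleton]
  have hfull_sum : #c * k ≤ ∑ i ∈ c, #(A i) :=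
    card_nsmul_le_sum _ _ _ fun i hi => hfull i (mem_compl.1 hi)
  have hP := hA.2 P
  rw [hcard, hsum] at hP
  -- in truncated subtraction this also holds when `Q` has no parts
  have hbound : (#Q.parts + #c - 1) * k ≤ (#Q.parts - 1) * k + #c * k := by
    rw [← add_mul]
    exact Nat.mul_le_mul_right k (by omega)
  omega

theorem Fin.val_lt_of_notMem_map_natAdd {m x ℓ : ℕ} (h : m + x = ℓ) {i : Fin ℓ}
    (hi : i ∉ univ.map ((Fin.natAddEmb m).trans (Fin.castLEEmb h.le))) : (i : ℕ) < m := by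
  by_contra! hmi
  exact hi (mem_map.2 ⟨⟨i - m, by omega⟩, mem_univ _, Fin.ext (by simp; omega)⟩)

theorem stmt2 {n k ℓ x : ℕ} (hxℓ : x ≤ ℓ)
    (A : Fin ℓ → Finset (Fin n)) (hgen : IsGenericCollection n k A)
    (hsum : ∑ i, (A i).card = (ℓ - 1) * k)
    (hfirst : ∀ i : Fin ℓ, i.val < ℓ - x → (A i).card = k) :
    IsGenericCollection n k
      (fun i : Fin x => A ⟨ℓ - x + i.val, by have := i.isLt; omega⟩) ∧
    ∑ i : Fin x, (A ⟨ℓ - x + i.val, by have := i.isLt; omega⟩).card = (x - 1) * k := by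
  have hℓ : ℓ - x + x = ℓ := Nat.sub_add_cancel hxℓ
  set e := (Fin.natAddEmb (ℓ - x)).trans (Fin.castLEEmb hℓ.le)
  have hfull : ∀ i ∉ univ.map e, #(A i) = k := fun i hi =>
    hfirst i (Fin.val_lt_of_notMem_map_natAdd hℓ hi)
  refine ⟨hgen.comp_embedding e fun i hi => (hfull i hi).ge, ?_⟩
  have hsplit := sum_add_sum_compl (univ.map e) fun i => #(A i)
  rw [sum_map, sum_congr rfl fun i hi => hfull i (mem_compl.1 hi), sum_const, card_compl,
    card_map, card_univ, Fintype.card_fin, Fintype.card_fin, smul_eq_mul, hsum] at hsplit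
  change ∑ i, #(A (e i)) = _
  rw [Nat.eq_sub_of_add_eq hsplit, ← Nat.sub_mul]
  congr 1
  omega
end

section
/- Let (A'_1,...,A'_{k-1}) be an (n,k-1,k-1)-generic collection of subsets of [n] with Σᵢ|A'_i| = (k-2)(k-1), where n ≥ (k-2)(k-1)+1. Pick p ∈ [n] not in A'_1 ∪ ... ∪ A'_{k-1} (such p exists), set A_i = A'_i ∪ {p} for i ∈ [k-1], and let A_k = A'_x ∪ {e} where A'_x has size k-2 and e is one element of (A'_1 ∪ ... ∪ A'_{k-1}) \ A'_x. Then (A_1,...,A_k) is an (n,k,k)-generic collection with Σᵢ|A_i| = (k-1)k. -/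
open Finset

section Fibers

variable {ι κ α : Type*} [Fintype ι] [DecidableEq κ] [Fintype α] [DecidableEq α]

def fiberInf (A : ι → Finset α) (c : ι → κ) (j : κ) : Finset α := ({i | c i = j} : Finset ι).inf A

def fiberSum (A : ι → Finset α) (c : ι → κ) : ℕ := ∑ j ∈ univ.image c, #(fiberInf A c j)

lemma mem_fiberInf {A : ι → Finset α} {c : ι → κ} {j : κ} {a : α} :
    a ∈ fiberInf A c j ↔ ∀ i, c i = j → a ∈ A i := by
  simp [fiberInf, mem_inf]

lemma fiberInf_subset {A : ι → Finset α} {c : ι → κ} {i : ι} : fiberInf A c (c i) ⊆ A i :=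
  fun _ ha ↦ mem_fiberInf.1 ha i rfl

lemma fiberInf_insert (B : ι → Finset α) (c : ι → κ) (p : α) (j : κ) :
    fiberInf (fun i ↦ insert p (B i)) c j = insert p (fiberInf B c j) := by
  ext a
  simp only [mem_fiberInf, mem_insert]
  by_cases hap : a = p <;> simp [hap]

lemma injOn_fiber (c : ι → κ) :
    Set.InjOn (fun j ↦ ({i | c i = j} : Finset ι)) (univ.image c) := by
  intro j hj j' _ h
  obtain ⟨i, -, rfl⟩ := mem_image.1 hj
  have hi : i ∈ ({i' | c i' = c i} : Finset ι) := mem_filter.2 ⟨mem_univ i, rfl⟩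
  simp only at h
  simpa [h] using hi

def Finpartition.ofFibers [DecidableEq ι] (c : ι → κ) : Finpartition (univ : Finset ι) :=
  .ofExistsUnique ((univ.image c).image fun j ↦ ({i | c i = j} : Finset ι))
    (fun _ _ ↦ subset_univ _)
    (fun a _ ↦ ⟨({i | c i = c a} : Finset ι), by simp, by
      rintro _ ⟨h, ha⟩
      simp only [mem_image, mem_univ, true_and] at h
      obtain ⟨_, ⟨b, rfl⟩, rfl⟩ := h
      simp_all⟩)
    (by simp [filter_eq_empty_iff])

lemma Finpartition.card_ofFibers [DecidableEq ι] (c : ι → κ) :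
    #(Finpartition.ofFibers c).parts = #(univ.image c) :=
  card_image_of_injOn (injOn_fiber c)

lemma Finpartition.sum_ofFibers [DecidableEq ι] (A : ι → Finset α) (c : ι → κ) :
    ∑ q ∈ (Finpartition.ofFibers c).parts, #(q.inf A) = fiberSum A c :=
  sum_image (injOn_fiber c)

lemma Finpartition.image_part [DecidableEq ι] (P : Finpartition (univ : Finset ι)) :
    univ.image P.part = P.parts := by
  ext q
  simp only [mem_image, mem_univ, true_and]
  refine ⟨fun ⟨i, hi⟩ ↦ hi ▸ P.part_mem.2 (mem_univ i), fun hq ↦ ?_⟩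
  obtain ⟨i, hi⟩ := P.nonempty_of_mem_parts hq
  exact ⟨i, (P.part_eq_iff_mem hq).2 hi⟩

lemma Finpartition.fiberSum_part [DecidableEq ι] (A : ι → Finset α)
    (P : Finpartition (univ : Finset ι)) : fiberSum A P.part = ∑ q ∈ P.parts, #(q.inf A) := by
  rw [fiberSum, P.image_part]
  refine sum_congr rfl fun q hq ↦ ?_
  rw [fiberInf, filter_congr fun i _ ↦ P.part_eq_iff_mem hq, filter_mem_eq_inter, univ_inter]

lemma image_merge_eq_erase {c : ι → κ} {a b : ι} (hab : c a ≠ c b) :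
    univ.image (fun i ↦ if c i = c b then c a else c i) = (univ.image c).erase (c b) := by
  ext j
  simp only [mem_image, mem_univ, true_and, mem_erase]
  constructor
  · rintro ⟨i, rfl⟩
    split_ifs with h
    · exact ⟨hab, a, rfl⟩
    · exact ⟨h, i, rfl⟩
  · rintro ⟨hj, i, rfl⟩
    exact ⟨i, if_neg hj⟩

lemma fiberSum_le_fiberSum_merge_add (A : ι → Finset α) {c : ι → κ} {a b : ι}
    (hab : c a ≠ c b) :
    fiberSum A c ≤ fiberSum A (fun i ↦ if c i = c b then c a else c i) + #(A a ∪ A b) := by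
  set c' := fun i ↦ if c i = c b then c a else c i
  have haS : c a ∈ (univ.image c).erase (c b) := by simp [hab]
  have hmerged : fiberInf A c' (c a) = fiberInf A c (c a) ∩ fiberInf A c (c b) := by
    ext y
    simp only [mem_inter, mem_fiberInf, c']
    constructor
    · intro h
      exact ⟨fun i hi ↦ h i (by simp [hi, hab]), fun i hi ↦ h i (by simp [hi])⟩
    · intro h i hi
      split_ifs at hi with hib
      exacts [h.2 i hib, h.1 i hi]
  have hrest : ∀ j ∈ ((univ.image c).erase (c b)).erase (c a),
      fiberInf A c' j = fiberInf A c j := by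
    intro j hj
    obtain ⟨hja, hjb, -⟩ : j ≠ c a ∧ j ≠ c b ∧ _ := by simpa using hj
    ext y
    simp only [mem_fiberInf, c']
    refine forall_congr' fun i ↦ imp_congr_left ?_
    split_ifs with hib
    · exact ⟨fun h ↦ (hja h.symm).elim, fun h ↦ (hjb (h ▸ hib)).elim⟩
    · rfl
  have hunion : #(fiberInf A c (c a)) + #(fiberInf A c (c b))
      ≤ #(A a ∪ A b) + #(fiberInf A c (c a) ∩ fiberInf A c (c b)) := by
    rw [← card_union_add_card_inter (fiberInf A c (c a))]
    gcongr <;> exact fiberInf_subset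
  have hbS : c b ∈ univ.image c := mem_image_of_mem c (mem_univ b)
  rw [fiberSum, fiberSum, image_merge_eq_erase hab, ← add_sum_erase _ _ hbS,
    ← add_sum_erase _ _ haS, ← add_sum_erase _ _ haS, hmerged,
    sum_congr rfl fun j hj ↦ congrArg card (hrest j hj)]
  omega

lemma fiberSum_le_of_forall_eq {k : ℕ} {A : ι → Finset α} {a b : ι} (hab : #(A a ∪ A b) ≤ k)
    (h : ∀ c : ι → κ, c a = c b → fiberSum A c ≤ (#(univ.image c) - 1) * k) (c : ι → κ) :
    fiberSum A c ≤ (#(univ.image c) - 1) * k := by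
  by_cases hc : c a = c b
  · exact h c hc
  have hmerged := h (fun i ↦ if c i = c b then c a else c i) (by simp only [if_neg hc, if_pos])
  rw [image_merge_eq_erase hc, card_erase_of_mem (mem_image_of_mem c (mem_univ b))] at hmerged
  have htwo : 2 ≤ #(univ.image c) := by
    rw [← card_pair hc]
    exact card_le_card (by simp [insert_subset_iff])
  calc fiberSum A c ≤ (#(univ.image c) - 1 - 1) * k + k :=
        (fiberSum_le_fiberSum_merge_add A hc).trans (add_le_add hmerged hab)
    _ = (#(univ.image c) - 1) * k := by
        rw [Nat.sub_one_mul, Nat.sub_add_cancel (Nat.le_mul_of_pos_left k (by omega))]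

lemma fiberInf_subset_fiberInf_castSucc {ℓ : ℕ} (A : Fin (ℓ + 1) → Finset α)
    (c : Fin (ℓ + 1) → κ) (j : κ) :
    fiberInf A c j ⊆ fiberInf (fun i : Fin ℓ ↦ A i.castSucc) (fun i ↦ c i.castSucc) j :=
  fun _ ha ↦ mem_fiberInf.2 fun _ hi ↦ mem_fiberInf.1 ha _ hi

lemma image_comp_castSucc {ℓ : ℕ} {c : Fin (ℓ + 1) → κ} {x : Fin ℓ}
    (hx : c (Fin.last ℓ) = c x.castSucc) :
    univ.image (fun i : Fin ℓ ↦ c i.castSucc) = univ.image c := by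
  ext j
  simp only [mem_image, mem_univ, true_and, Fin.exists_fin_succ' (P := fun i ↦ c i = j), hx]
  exact (or_iff_left_of_imp fun h ↦ ⟨x, h⟩).symm

end Fibers

namespace IsGenericCollection

variable {n ℓ k : ℕ}

lemma fiberSum_le {κ : Type*} [DecidableEq κ] {A : Fin ℓ → Finset (Fin n)}
    (h : IsGenericCollection n k A) (c : Fin ℓ → κ) :
    fiberSum A c ≤ (#(univ.image c) - 1) * k := by
  simpa [Finpartition.sum_ofFibers, Finpartition.card_ofFibers] using h.2 (.ofFibers c)

lemma of_fiberSum_le {A : Fin ℓ → Finset (Fin n)} (hcard : ∀ i, #(A i) ≤ k)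
    (h : ∀ c : Fin ℓ → Finset (Fin ℓ), fiberSum A c ≤ (#(univ.image c) - 1) * k) :
    IsGenericCollection n k A :=
  ⟨hcard, fun P ↦ by simpa [P.fiberSum_part, P.image_part] using h P.part⟩

variable {B : Fin ℓ → Finset (Fin n)} {A : Fin (ℓ + 1) → Finset (Fin n)} {p : Fin n}

lemma fiberSum_le_of_last_eq {κ : Type*} [DecidableEq κ] (hB : IsGenericCollection n k B)
    (hA : ∀ i, A i.castSucc = insert p (B i)) (hpA : p ∉ A (Fin.last ℓ))
    {c : Fin (ℓ + 1) → κ} {x : Fin ℓ} (hx : c (Fin.last ℓ) = c x.castSucc) :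
    fiberSum A c ≤ (#(univ.image c) - 1) * (k + 1) := by
  set c' := fun i ↦ c (Fin.castSucc i)
  have hsub : ∀ j, fiberInf A c j ⊆ insert p (fiberInf B c' j) := fun j ↦ by
    simpa only [hA, fiberInf_insert] using fiberInf_subset_fiberInf_castSucc A c j
  have hle : ∀ j, #(fiberInf A c j) ≤ #(fiberInf B c' j) + 1 :=
    fun j ↦ (card_le_card (hsub j)).trans (card_insert_le _ _)
  have hlt : #(fiberInf A c (c (Fin.last ℓ))) < #(fiberInf B c' (c (Fin.last ℓ))) + 1 := by
    refine Nat.lt_succ_of_le (card_le_card fun a ha ↦ ?_)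
    obtain rfl | h := mem_insert.1 (hsub _ ha)
    · exact absurd (fiberInf_subset ha) hpA
    · exact h
  have hsum : fiberSum A c < fiberSum B c' + #(univ.image c) := by
    rw [fiberSum, fiberSum, image_comp_castSucc hx, card_eq_sum_ones, ← sum_add_distrib]
    exact sum_lt_sum (fun j _ ↦ hle j) ⟨_, mem_image_of_mem c (mem_univ _), hlt⟩
  have hbound := hB.fiberSum_le c'
  rw [image_comp_castSucc hx] at hbound
  obtain ⟨s, hs⟩ : ∃ s, #(univ.image c) = s + 1 :=
    ⟨_, (Nat.succ_pred_eq_of_pos (card_pos.2 ⟨_, mem_image_of_mem c (mem_univ x.castSucc)⟩)).symm⟩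
  rw [hs, Nat.add_sub_cancel] at hbound ⊢
  rw [hs] at hsum
  rw [mul_add_one]
  omega

theorem extend (hB : IsGenericCollection n k B) (hA : ∀ i, A i.castSucc = insert p (B i))
    {x : Fin ℓ} (hxA : B x ⊆ A (Fin.last ℓ)) (hpA : p ∉ A (Fin.last ℓ))
    (hcard : #(A (Fin.last ℓ)) ≤ k) :
    IsGenericCollection n (k + 1) A := by
  refine of_fiberSum_le (fun i ↦ ?_) fun c ↦
    fiberSum_le_of_forall_eq (a := Fin.last ℓ) (b := x.castSucc) ?_
      (fun c hc ↦ hB.fiberSum_le_of_last_eq hA hpA hc) c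
  · induction i using Fin.lastCases with
    | last => omega
    | cast i =>
      rw [hA]
      exact (card_insert_le _ _).trans (Nat.add_le_add_right (hB.1 i) 1)
  · rw [hA, union_insert, union_eq_left.2 hxA]
    exact (card_insert_le _ _).trans (Nat.add_le_add_right hcard 1)

end IsGenericCollection

theorem stmt6 {n k : ℕ} (hk : 3 ≤ k)
    (A' : Fin (k - 1) → Finset (Fin n))
    (hgen : IsGenericCollection n (k - 1) A')
    (hsum : ∑ i, (A' i).card = (k - 2) * (k - 1))
    (p : Fin n) (hp : ∀ i, p ∉ A' i)
    (x : Fin (k - 1)) (hx : (A' x).card = k - 2)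
    (e : Fin n) (he : e ∈ Finset.univ.biUnion A' \ A' x)
    (A : Fin k → Finset (Fin n))
    (hA : ∀ i : Fin k, (h : i.val < k - 1) → A i = insert p (A' ⟨i.val, h⟩))
    (hAk : A ⟨k - 1, by omega⟩ = insert e (A' x)) :
    IsGenericCollection n k A ∧ ∑ i, (A i).card = (k - 1) * k := by
  obtain ⟨ℓ, rfl⟩ : ∃ ℓ, k = ℓ + 1 := ⟨k - 1, by omega⟩
  have hAcast : ∀ i : Fin ℓ, A i.castSucc = insert p (A' i) := fun i ↦ hA i.castSucc i.isLt
  have hAlast : A (Fin.last ℓ) = insert e (A' x) := hAk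
  obtain ⟨heA', heAx⟩ := mem_sdiff.1 he
  have hpe : p ≠ e := by
    obtain ⟨i, -, hei⟩ := mem_biUnion.1 heA'
    rintro rfl
    exact hp i hei
  have hpA : p ∉ A (Fin.last ℓ) := by simp [hAlast, hpe, hp x]
  have hcard : #(A (Fin.last ℓ)) = ℓ := by
    rw [hAlast, card_insert_of_notMem heAx, hx]
    omega
  refine ⟨hgen.extend hAcast (hAlast ▸ subset_insert e (A' x)) hpA hcard.le, ?_⟩
  have hsum' : ∑ i : Fin ℓ, #(A' i) = (ℓ - 1) * ℓ := hsum
  rw [Fin.sum_univ_castSucc, hcard]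
  simp only [hAcast, card_insert_of_notMem (hp _), sum_add_distrib, sum_const, card_univ,
    Fintype.card_fin, smul_eq_mul, mul_one]
  rw [hsum', Nat.add_sub_cancel, ← Nat.add_one_mul, Nat.sub_add_cancel (by omega)]
  ring
end

section
/- Let (A'_1,...,A'_ℓ) be an (n,k,ℓ)-generic collection of subsets of [n] with Σᵢ|A'_i| = (ℓ-1)k, where n ≥ (ℓ-1)k + 1. Pick p ∈ [n] \ (A'_1 ∪ ... ∪ A'_ℓ) (which exists), and define A_i = A'_i ∪ {p} for i ∈ [ℓ-1] and A_ℓ = A'_ℓ. Then (A_1,...,A_ℓ) is an (n,k+1,ℓ)-generic collection with Σᵢ|A_i| = (ℓ-1)(k+1). -/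
/-!
Adding `p` to a set can raise the size of an intersection of sets by at most one, and not at all
if one of the intersected sets avoids `p`. In a partition into `s` parts, the part containing the
untouched last index therefore keeps its intersection, and the other `s - 1` parts gain at most
one element each, which is exactly the slack between `(s - 1) k` and `(s - 1) (k + 1)`.
-/

open Finset

section InfInsert

variable {ι α : Type*} [Fintype α] [DecidableEq α] {A A' : ι → Finset α} {p : α}

theorem Finset.inf_subset_insert_inf (hsub : ∀ i, A i ⊆ insert p (A' i)) (q : Finset ι) :
    q.inf A ⊆ insert p (q.inf A') := by
  rw [insert_eq, ← sup_eq_union, inf_sup_distrib_left]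
  exact inf_mono_fun fun i _ => by rw [sup_eq_union, ← insert_eq]; exact hsub i

theorem Finset.card_inf_le_card_inf_add_one (hsub : ∀ i, A i ⊆ insert p (A' i)) (q : Finset ι) :
    (q.inf A).card ≤ (q.inf A').card + 1 :=
  (card_le_card (inf_subset_insert_inf hsub q)).trans (card_insert_le _ _)

theorem Finset.inf_subset_inf_of_notMem (hsub : ∀ i, A i ⊆ insert p (A' i)) {q : Finset ι}
    {j : ι} (hjq : j ∈ q) (hj : p ∉ A j) : q.inf A ⊆ q.inf A' := fun _ hx =>
  (mem_insert.1 (inf_subset_insert_inf hsub q hx)).resolve_left fun hxp =>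
    hj (hxp ▸ inf_le (f := A) hjq hx)

theorem Finpartition.sum_card_inf_le_of_subset_insert [Fintype ι] [DecidableEq ι]
    (P : Finpartition (univ : Finset ι)) (hsub : ∀ i, A i ⊆ insert p (A' i)) {j : ι}
    (hj : p ∉ A j) :
    ∑ q ∈ P.parts, (q.inf A).card ≤ ∑ q ∈ P.parts, (q.inf A').card + (P.parts.card - 1) := by
  obtain ⟨q₀, hq₀, hjq₀⟩ := P.exists_mem (mem_univ j)
  rw [← add_sum_erase _ _ hq₀, ← add_sum_erase _ _ hq₀, ← card_erase_of_mem hq₀]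
  have hq₀_le := card_le_card (inf_subset_inf_of_notMem hsub hjq₀ hj)
  have hrest : ∑ q ∈ P.parts.erase q₀, (q.inf A).card
      ≤ ∑ q ∈ P.parts.erase q₀, ((q.inf A').card + 1) :=
    sum_le_sum fun q _ => card_inf_le_card_inf_add_one hsub q
  rw [sum_add_distrib, sum_const, smul_eq_mul, mul_one] at hrest
  omega

end InfInsert

theorem IsGenericCollection.of_subset_insert {n k ℓ : ℕ} {A A' : Fin ℓ → Finset (Fin n)}
    {p : Fin n} (hgen : IsGenericCollection n k A') (hsub : ∀ i, A i ⊆ insert p (A' i))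
    {j : Fin ℓ} (hj : p ∉ A j) : IsGenericCollection n (k + 1) A := by
  refine ⟨fun i => ?_, fun P => ?_⟩
  · exact (card_le_card (hsub i)).trans ((card_insert_le _ _).trans (Nat.add_le_add_right (hgen.1 i) 1))
  · calc ∑ q ∈ P.parts, (q.inf A).card
        ≤ ∑ q ∈ P.parts, (q.inf A').card + (P.parts.card - 1) :=
          P.sum_card_inf_le_of_subset_insert hsub hj
      _ ≤ (P.parts.card - 1) * k + (P.parts.card - 1) := by gcongr; exact hgen.2 P
      _ = (P.parts.card - 1) * (k + 1) := by ring

theorem Finset.sum_card_insert_of_ne {ι α : Type*} [Fintype ι] [DecidableEq ι] [DecidableEq α]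
    {A A' : ι → Finset α} {p : α} (hp : ∀ i, p ∉ A' i) {j : ι}
    (hA : ∀ i ≠ j, A i = insert p (A' i)) (hAj : A j = A' j) :
    ∑ i, (A i).card = ∑ i, (A' i).card + (Fintype.card ι - 1) := by
  rw [← add_sum_erase _ _ (mem_univ j), ← add_sum_erase _ (fun i => (A' i).card) (mem_univ j),
    ← card_univ, ← card_erase_of_mem (mem_univ j), card_eq_sum_ones (univ.erase j), hAj,
    add_assoc, ← sum_add_distrib]
  congr 1
  exact sum_congr rfl fun i hi => by rw [hA i (ne_of_mem_erase hi), card_insert_of_notMem (hp i)]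

theorem stmt8_general {n k ℓ : ℕ} (hℓ : 2 ≤ ℓ)
    (A' : Fin ℓ → Finset (Fin n)) (hgen : IsGenericCollection n k A')
    (hsum : ∑ i, (A' i).card = (ℓ - 1) * k)
    (p : Fin n) (hp : ∀ i, p ∉ A' i)
    (A : Fin ℓ → Finset (Fin n))
    (hA : ∀ i : Fin ℓ, i.val < ℓ - 1 → A i = insert p (A' i))
    (hAl : ∀ i : Fin ℓ, i.val = ℓ - 1 → A i = A' i) :
    IsGenericCollection n (k + 1) A ∧ ∑ i, (A i).card = (ℓ - 1) * (k + 1) := by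
  let j : Fin ℓ := ⟨ℓ - 1, by omega⟩
  have hAj : A j = A' j := hAl j rfl
  have hA_ne : ∀ i ≠ j, A i = insert p (A' i) := fun i hi =>
    hA i ((Nat.le_sub_one_of_lt i.isLt).lt_of_ne (Fin.val_ne_iff.2 hi))
  have hsub : ∀ i, A i ⊆ insert p (A' i) := fun i => by
    by_cases hi : i = j
    · rw [hi, hAj]
      exact subset_insert _ _
    · rw [hA_ne i hi]
  refine ⟨hgen.of_subset_insert hsub (hAj ▸ hp j), ?_⟩
  rw [sum_card_insert_of_ne hp hA_ne hAj, hsum, Fintype.card_fin]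
  ring

theorem stmt8 {n k ℓ : ℕ} (hℓ : 2 ≤ ℓ) (hk : 1 ≤ k) (hn : (ℓ - 1) * k + 1 ≤ n)
    (A' : Fin ℓ → Finset (Fin n)) (hgen : IsGenericCollection n k A')
    (hsum : ∑ i, (A' i).card = (ℓ - 1) * k)
    (p : Fin n) (hp : ∀ i, p ∉ A' i)
    (A : Fin ℓ → Finset (Fin n))
    (hA : ∀ i : Fin ℓ, i.val < ℓ - 1 → A i = insert p (A' i))
    (hAl : ∀ i : Fin ℓ, i.val = ℓ - 1 → A i = A' i) :
    IsGenericCollection n (k + 1) A ∧ ∑ i, (A i).card = (ℓ - 1) * (k + 1) :=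
  stmt8_general hℓ A' hgen hsum p hp A hA hAl
end

section
/- Schwartz–Zippel: Let p(x_1,...,x_n) be a nonzero polynomial of total degree d over a field F and let S ⊆ F be finite with |S| ≥ d. If x_1,...,x_n are chosen independently and uniformly at random from S, then the number of tuples (x_1,...,x_n) ∈ S^n with p(x_1,...,x_n) = 0 is at most d·|S|^{n-1}. -/
open MvPolynomial Finset Fintype

namespace MvPolynomial

variable {R : Type*} [CommRing R] [IsDomain R] [DecidableEq R]

theorem card_zeros_mul_card_le {n : ℕ} {p : MvPolynomial (Fin n) R} (hp : p ≠ 0)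
    (S : Finset R) :
    #{x ∈ piFinset fun _ ↦ S | eval x p = 0} * #S ≤ p.totalDegree * #S ^ n := by
  obtain rfl | hS := S.eq_empty_or_nonempty
  · simp
  have hSpos : (0 : ℚ≥0) < #S := by exact_mod_cast hS.card_pos
  have h := schwartz_zippel_totalDegree hp S
  rw [div_le_div_iff₀ (by positivity) hSpos] at h
  exact_mod_cast h

theorem card_zeros_le {n : ℕ} {p : MvPolynomial (Fin n) R} (hp : p ≠ 0) (S : Finset R) :
    #{x ∈ piFinset fun _ ↦ S | eval x p = 0} ≤ p.totalDegree * #S ^ (n - 1) := by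
  cases n with
  | zero =>
    -- `n - 1` truncates to `0` here, so the bound must come from `p` being a nonzero constant.
    rw [p.eq_C_of_isEmpty] at hp ⊢
    simp [C_ne_zero.mp hp]
  | succ m =>
    obtain rfl | hS := S.eq_empty_or_nonempty
    · simp
    refine Nat.le_of_mul_le_mul_right ?_ hS.card_pos
    simpa [pow_succ, mul_assoc] using card_zeros_mul_card_le hp S

end MvPolynomial

theorem stmt16_general {F : Type*} [Field F] {n : ℕ}
    (p : MvPolynomial (Fin n) F) (hp : p ≠ 0)
    (S : Finset F) :
    Nat.card {x : Fin n → F // (∀ i, x i ∈ S) ∧ MvPolynomial.eval x p = 0} ≤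
      p.totalDegree * S.card ^ (n - 1) := by
  classical
  calc Nat.card {x : Fin n → F // (∀ i, x i ∈ S) ∧ MvPolynomial.eval x p = 0}
      = #{x ∈ piFinset fun _ ↦ S | eval x p = 0} := by
        rw [← Nat.card_eq_finsetCard]
        exact Nat.card_congr (Equiv.subtypeEquivRight fun x ↦ by simp)
    _ ≤ p.totalDegree * #S ^ (n - 1) := card_zeros_le hp S

theorem stmt16 {F : Type*} [Field F] {n : ℕ}
    (p : MvPolynomial (Fin n) F) (hp : p ≠ 0)
    (S : Finset F) (hS : p.totalDegree ≤ S.card) :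
    Nat.card {x : Fin n → F // (∀ i, x i ∈ S) ∧ MvPolynomial.eval x p = 0} ≤
      p.totalDegree * S.card ^ (n - 1) :=
  stmt16_general p hp S
end
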